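/- arXiv:2205.07709 — 5 statements merged into one kernel-verified Lean document; each statement's English description precedes it below -/
import Mathlib

section
/- Let T be a rooted tree with vertex set V and M ⊆ V a set of more than ℓ nodes (ℓ ≥ 1). Then there exists a subtree U of T with topmost node u such that the induced subgraph of T on (V(T) \ V(U)) ∪ {u} is connected and ℓ/2 ≤ |M ∩ (V(U) \ {u})| ≤ ℓ. -/
/-!
Weigh each vertex `v` by the number of nodes of `M` strictly below it. The root weighs at least
`ℓ`, so there is a vertex `v` of weight at least `ℓ` whose subtree is minimal among such vertices.
By minimality every child subtree of `v` contains at most `ℓ` nodes of `M`, while together they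
contain at least `ℓ`; a greedy choice of child subtrees then collects between `ℓ / 2` and `ℓ`
nodes of `M`, and `v` together with these child subtrees is the required `U`.
-/

open Finset Function

theorem Function.IsPeriodicPt.eq_of_iterate_eq {α : Type*} {f : α → α} {x r : α} {n m : ℕ}
    (hx : IsPeriodicPt f n x) (hn : 0 < n) (hr : IsFixedPt f r) (hm : f^[m] x = r) : x = r :=
  calc x = f^[n * m - m] (f^[m] x) := by
        rw [← iterate_add_apply, Nat.sub_add_cancel (Nat.le_mul_of_pos_left m hn), hx.mul_const m]
    _ = r := by rw [hm, iterate_fixed hr]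

theorem Finset.exists_subset_le_two_mul_sum_and_sum_le {ι : Type*} [DecidableEq ι] (f : ι → ℕ)
    (ℓ : ℕ) (s : Finset ι) (hs : ℓ ≤ 2 * ∑ i ∈ s, f i) (hf : ∀ i ∈ s, f i ≤ ℓ) :
    ∃ t ⊆ s, ℓ ≤ 2 * ∑ i ∈ t, f i ∧ ∑ i ∈ t, f i ≤ ℓ := by
  induction s using Finset.induction_on with
  | empty => exact ⟨∅, subset_rfl, by simpa using hs, by simp⟩
  | insert a s ha ih =>
    by_cases hfa : ℓ ≤ 2 * f a
    · exact ⟨{a}, by simp, by simpa using hfa, by simpa using hf a (mem_insert_self a s)⟩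
    by_cases hsum : ℓ ≤ 2 * ∑ i ∈ s, f i
    · obtain ⟨t, hts, ht⟩ := ih hsum fun i hi => hf i (mem_insert_of_mem hi)
      exact ⟨t, hts.trans (subset_insert a s), ht⟩
    · refine ⟨insert a s, subset_rfl, hs, ?_⟩
      rw [sum_insert ha] at hs ⊢
      omega

/-- `U` hangs from `u`: it is closed under taking children below `u`, and removing `U \ {u}`
leaves a part of the tree containing `u` that is closed under `parent`. -/
def IsPendantSubtree {V : Type*} (parent : V → V) (U : Finset V) (u : V) : Prop :=
  u ∈ U ∧ (∀ x ∈ U, x ≠ u → parent x ∈ U) ∧ (∀ y : V, parent y ∈ U → parent y ≠ u → y ∈ U) ∧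
    ∀ x : V, (x ∉ U ∨ x = u) → (parent x ∉ U ∨ parent x = u)

section Descendants

variable {V : Type*} [Fintype V] {parent : V → V}

open Classical in
noncomputable def descendants (parent : V → V) (v : V) : Finset V :=
  univ.filter fun x => ∃ n : ℕ, parent^[n] x = v

open Classical in
/-- The root is its own parent, but not its own child. -/
noncomputable def children (parent : V → V) (v : V) : Finset V :=
  univ.filter fun c => parent c = v ∧ c ≠ v

@[simp]
theorem mem_descendants {v x : V} : x ∈ descendants parent v ↔ ∃ n : ℕ, parent^[n] x = v := by
  simp [descendants]

@[simp]
theorem mem_children {v c : V} : c ∈ children parent v ↔ parent c = v ∧ c ≠ v := by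
  simp [children]

theorem self_mem_descendants (v : V) : v ∈ descendants parent v :=
  mem_descendants.2 ⟨0, rfl⟩

theorem mem_descendants_of_parent_mem {v x : V} (hx : parent x ∈ descendants parent v) :
    x ∈ descendants parent v := by
  obtain ⟨n, hn⟩ := mem_descendants.1 hx
  exact mem_descendants.2 ⟨n + 1, hn⟩

theorem parent_mem_descendants {v x : V} (hx : x ∈ descendants parent v) (hxv : x ≠ v) :
    parent x ∈ descendants parent v := by
  obtain ⟨_ | n, hn⟩ := mem_descendants.1 hx
  · exact absurd hn hxv
  · exact mem_descendants.2 ⟨n, by rwa [← iterate_succ_apply]⟩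

theorem descendants_subset_of_mem {v c : V} (hc : c ∈ descendants parent v) :
    descendants parent c ⊆ descendants parent v := by
  intro x hx
  obtain ⟨m, hm⟩ := mem_descendants.1 hc
  obtain ⟨n, hn⟩ := mem_descendants.1 hx
  exact mem_descendants.2 ⟨m + n, by rw [iterate_add_apply, hn, hm]⟩

theorem mem_descendants_of_mem_children {v c : V} (hc : c ∈ children parent v) :
    c ∈ descendants parent v :=
  mem_descendants.2 ⟨1, (mem_children.1 hc).1⟩

theorem mem_descendants_total {a b x : V} (ha : x ∈ descendants parent a)
    (hb : x ∈ descendants parent b) :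
    a ∈ descendants parent b ∨ b ∈ descendants parent a := by
  have key : ∀ {a b : V} {i j : ℕ}, i ≤ j → parent^[i] x = a → parent^[j] x = b →
      a ∈ descendants parent b := fun {_ _ i j} hij ha hb =>
    mem_descendants.2 ⟨j - i, by rw [← ha, ← iterate_add_apply, Nat.sub_add_cancel hij, hb]⟩
  obtain ⟨i, hi⟩ := mem_descendants.1 ha
  obtain ⟨j, hj⟩ := mem_descendants.1 hb
  rcases le_total i j with hij | hji
  · exact Or.inl (key hij hi hj)
  · exact Or.inr (key hji hj hi)

section RootedTree

variable {root : V} (hroot : parent root = root) (hreach : ∀ v, ∃ n : ℕ, parent^[n] v = root)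
include hroot hreach

theorem eq_of_mem_descendants_of_mem_descendants {x y : V} (hxy : x ∈ descendants parent y)
    (hyx : y ∈ descendants parent x) : x = y := by
  obtain ⟨a, ha⟩ := mem_descendants.1 hxy
  obtain ⟨b, hb⟩ := mem_descendants.1 hyx
  have hcycle : parent^[b + a] x = x := by rw [iterate_add_apply, ha, hb]
  rcases Nat.eq_zero_or_pos (b + a) with hba | hba
  · rw [← ha, show a = 0 by omega, iterate_zero_apply]
  · obtain ⟨m, hm⟩ := hreach x
    have hx := IsPeriodicPt.eq_of_iterate_eq hcycle hba hroot hm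
    rw [← ha, hx, iterate_fixed hroot]

theorem notMem_descendants_of_mem_children {v c : V} (hc : c ∈ children parent v) :
    v ∉ descendants parent c := fun hv =>
  (mem_children.1 hc).2
    (eq_of_mem_descendants_of_mem_descendants hroot hreach (mem_descendants_of_mem_children hc) hv)

theorem descendants_ssubset_of_mem_children {v c : V} (hc : c ∈ children parent v) :
    descendants parent c ⊂ descendants parent v :=
  ssubset_iff_of_subset (descendants_subset_of_mem (mem_descendants_of_mem_children hc)) |>.2
    ⟨v, self_mem_descendants v, notMem_descendants_of_mem_children hroot hreach hc⟩

theorem pairwiseDisjoint_descendants_children (v : V) :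
    (children parent v : Set V).PairwiseDisjoint (descendants parent) := by
  intro c₁ h₁ c₂ h₂ hne
  refine disjoint_left.2 fun x hx₁ hx₂ => ?_
  have below_other : ∀ {a b : V}, a ∈ children parent v → b ∈ children parent v → a ≠ b →
      a ∉ descendants parent b := fun ha hb hab hab' =>
    notMem_descendants_of_mem_children hroot hreach hb <| (mem_children.1 ha).1 ▸
      parent_mem_descendants hab' hab
  rcases mem_descendants_total hx₁ hx₂ with h | h
  · exact below_other h₁ h₂ hne h
  · exact below_other h₂ h₁ (Ne.symm hne) h

variable [DecidableEq V]

theorem erase_descendants_eq_biUnion_children (v : V) :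
    (descendants parent v).erase v = (children parent v).biUnion (descendants parent) := by
  ext x
  simp only [mem_erase, mem_biUnion]
  constructor
  · rintro ⟨hxv, hx⟩
    obtain ⟨n, hn⟩ := mem_descendants.1 hx
    clear hx
    induction n generalizing x with
    | zero => exact absurd hn hxv
    | succ n ih =>
      by_cases hpx : parent x = v
      · exact ⟨x, mem_children.2 ⟨hpx, hxv⟩, self_mem_descendants x⟩
      · obtain ⟨c, hc, hxc⟩ := ih (parent x) hpx hn
        exact ⟨c, hc, mem_descendants_of_parent_mem hxc⟩
  · rintro ⟨c, hc, hxc⟩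
    refine ⟨?_, descendants_subset_of_mem (mem_descendants_of_mem_children hc) hxc⟩
    rintro rfl
    exact notMem_descendants_of_mem_children hroot hreach hc hxc

theorem notMem_biUnion_descendants_of_subset_children {v : V} {t : Finset V}
    (ht : t ⊆ children parent v) : v ∉ t.biUnion (descendants parent) := fun hv => by
  obtain ⟨c, hc, hvc⟩ := mem_biUnion.1 hv
  exact notMem_descendants_of_mem_children hroot hreach (ht hc) hvc

theorem card_inter_biUnion_descendants (M : Finset V) {v : V} {t : Finset V}
    (ht : t ⊆ children parent v) :
    #(M ∩ t.biUnion (descendants parent)) = ∑ c ∈ t, #(M ∩ descendants parent c) := by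
  rw [inter_biUnion, card_biUnion]
  exact ((pairwiseDisjoint_descendants_children hroot hreach v).subset ht).mono
    fun _ => inter_subset_right

theorem isPendantSubtree_insert_biUnion_descendants {v : V} {t : Finset V}
    (ht : t ⊆ children parent v) :
    IsPendantSubtree parent (insert v (t.biUnion (descendants parent))) v := by
  have mem_of_parent_mem : ∀ y, parent y ∈ t.biUnion (descendants parent) →
      y ∈ t.biUnion (descendants parent) := by
    simp only [mem_biUnion]
    exact fun y ⟨c, hc, hyc⟩ => ⟨c, hc, mem_descendants_of_parent_mem hyc⟩
  refine ⟨mem_insert_self _ _, ?_, ?_, ?_⟩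
  · intro x hx hxv
    obtain ⟨c, hc, hxc⟩ := mem_biUnion.1 ((mem_insert.1 hx).resolve_left hxv)
    by_cases hxc' : x = c
    · subst hxc'
      rw [(mem_children.1 (ht hc)).1]
      exact mem_insert_self _ _
    · exact mem_insert_of_mem (mem_biUnion.2 ⟨c, hc, parent_mem_descendants hxc hxc'⟩)
  · intro y hy hyv
    exact mem_insert_of_mem (mem_of_parent_mem y ((mem_insert.1 hy).resolve_left hyv))
  · intro x hx
    by_contra! hpx
    have hpB := (mem_insert.1 hpx.1).resolve_left hpx.2
    have hx_eq : x = v := hx.resolve_left (not_not.2 (mem_insert_of_mem (mem_of_parent_mem x hpB)))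
    subst hx_eq
    exact notMem_biUnion_descendants_of_subset_children hroot hreach ht (mem_of_parent_mem x hpB)

theorem exists_balanced_vertex (M : Finset V) (ℓ : ℕ) (hM : ℓ < #M) :
    ∃ v, ℓ ≤ #(M ∩ (descendants parent v).erase v) ∧
      ∀ c ∈ children parent v, #(M ∩ descendants parent c) ≤ ℓ := by
  have weight_ge (v : V) :
      #(M ∩ descendants parent v) ≤ #(M ∩ (descendants parent v).erase v) + 1 := by
    rw [inter_erase]
    have := pred_card_le_card_erase (s := M ∩ descendants parent v) (a := v)
    omega
  set heavy := univ.filter fun v => ℓ ≤ #(M ∩ (descendants parent v).erase v)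
  have hroot_heavy : root ∈ heavy := by
    have huniv : descendants parent root = univ :=
      eq_univ_of_forall fun x => mem_descendants.2 (hreach x)
    have := weight_ge root
    rw [huniv, inter_univ] at this
    exact mem_filter.2 ⟨mem_univ _, by rw [huniv]; omega⟩
  obtain ⟨v, hv, hmin⟩ := exists_min_image heavy (fun v => #(descendants parent v)) ⟨_, hroot_heavy⟩
  refine ⟨v, (mem_filter.1 hv).2, fun c hc => ?_⟩
  by_contra! hc_light
  have hc_heavy : c ∈ heavy := mem_filter.2 ⟨mem_univ _, by have := weight_ge c; omega⟩
  exact (hmin c hc_heavy).not_gt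
    (card_lt_card (descendants_ssubset_of_mem_children hroot hreach hc))

end RootedTree

end Descendants

theorem rooted_tree_balanced_subtree_general {V : Type*} [Fintype V] [DecidableEq V]
    (parent : V → V) (root : V)
    (hroot : parent root = root)
    (hreach : ∀ v, ∃ n : ℕ, parent^[n] v = root)
    (M : Finset V) (ℓ : ℕ) (hM : ℓ < M.card) :
    ∃ (U : Finset V) (u : V), u ∈ U ∧
      (∀ x ∈ U, x ≠ u → parent x ∈ U) ∧
      (∀ y : V, parent y ∈ U → parent y ≠ u → y ∈ U) ∧
      (∀ x : V, (x ∉ U ∨ x = u) → (parent x ∉ U ∨ parent x = u)) ∧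
      ℓ ≤ 2 * (M ∩ U.erase u).card ∧ (M ∩ U.erase u).card ≤ ℓ := by
  obtain ⟨v, hv_heavy, hchildren_light⟩ := exists_balanced_vertex hroot hreach M ℓ hM
  rw [erase_descendants_eq_biUnion_children hroot hreach,
    card_inter_biUnion_descendants hroot hreach M subset_rfl] at hv_heavy
  obtain ⟨t, ht, hlow, hhigh⟩ := exists_subset_le_two_mul_sum_and_sum_le
    (fun c => #(M ∩ descendants parent c)) ℓ (children parent v) (by omega) hchildren_light
  obtain ⟨hv, hup, hdown, hrest⟩ := isPendantSubtree_insert_biUnion_descendants hroot hreach ht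
  refine ⟨_, v, hv, hup, hdown, hrest, ?_⟩
  rw [erase_insert (notMem_biUnion_descendants_of_subset_children hroot hreach ht),
    card_inter_biUnion_descendants hroot hreach M ht]
  exact ⟨hlow, hhigh⟩

/-- In a finite rooted tree (given by a parent function), if `M` has more
than `ℓ` nodes, there is a downward-closed subtree `U` with topmost node `u` such that
the rest of the tree (together with `u`) is still connected (closed under `parent`),
and `ℓ/2 ≤ |M ∩ (U \ {u})| ≤ ℓ`. -/
theorem rooted_tree_balanced_subtree {V : Type*} [Fintype V] [DecidableEq V]
    (parent : V → V) (root : V)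
    (hroot : parent root = root)
    (hreach : ∀ v, ∃ n : ℕ, parent^[n] v = root)
    (M : Finset V) (ℓ : ℕ) (hℓ : 1 ≤ ℓ) (hM : ℓ < M.card) :
    ∃ (U : Finset V) (u : V), u ∈ U ∧
      (∀ x ∈ U, x ≠ u → parent x ∈ U) ∧
      (∀ y : V, parent y ∈ U → parent y ≠ u → y ∈ U) ∧
      (∀ x : V, (x ∉ U ∨ x = u) → (parent x ∉ U ∨ parent x = u)) ∧
      ℓ ≤ 2 * (M ∩ U.erase u).card ∧ (M ∩ U.erase u).card ≤ ℓ :=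
  rooted_tree_balanced_subtree_general parent root hroot hreach M ℓ hM
end

section
/- Let C be a code of length m over an alphabet of size q containing at least k ≥ 2 codewords, with the property that every two distinct codewords differ in at least (1 − 2/k²)·m coordinates. Then for every set T of k distinct codewords there exists a coordinate i ∈ [m] such that all k codewords of T take pairwise distinct values at coordinate i. -/
/-- A length-`m` code over an alphabet of size `q` with at least `k ≥ 2`
codewords and minimum distance `(1 - 2/k²)·m` is a splitter in the injective sense:
for every set `T` of `k` codewords there is a coordinate on which they are pairwise
distinct. -/
theorem code_is_splitter {A : Type*} [Fintype A] [DecidableEq A]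
    (q m k : ℕ) (hq : Fintype.card A = q) (hk : 2 ≤ k)
    (C : Finset (Fin m → A)) (hkC : k ≤ C.card)
    (hdist : ∀ c ∈ C, ∀ c' ∈ C, c ≠ c' →
      (1 - 2 / (k : ℝ) ^ 2) * m ≤ ((Finset.univ.filter fun i : Fin m => c i ≠ c' i).card : ℝ)) :
    ∀ T ⊆ C, T.card = k →
      ∃ i : Fin m, ∀ c ∈ T, ∀ c' ∈ T, c i = c' i → c = c' := by
  classical
  intro T hTC hTk
  have hk0 : (0:ℝ) < (k:ℝ) := by exact_mod_cast Nat.lt_of_lt_of_le (by norm_num) hk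
  -- m > 0
  have hm : 0 < m := by
    obtain ⟨a, ha, b, hb, hab⟩ := Finset.one_lt_card.mp (lt_of_lt_of_le (by omega) hkC)
    by_contra h
    push_neg at h
    exact hab (funext fun i => absurd i.isLt (by omega))
  set B := Finset.univ.filter
    (fun i : Fin m => ∃ c ∈ T, ∃ c' ∈ T, c ≠ c' ∧ c i = c' i) with hB
  -- each pair's agreement set is small
  have key1 : ∀ p ∈ T.offDiag,
      ((Finset.univ.filter fun i : Fin m => p.1 i = p.2 i).card : ℝ) ≤ 2/(k:ℝ)^2 * m := by
    rintro ⟨c, c'⟩ hp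
    rw [Finset.mem_offDiag] at hp
    obtain ⟨hc, hc', hne⟩ := hp
    have hd := hdist c (hTC hc) c' (hTC hc') hne
    have hsplit : (Finset.univ.filter fun i : Fin m => c i = c' i).card
        + (Finset.univ.filter fun i : Fin m => ¬ (c i = c' i)).card = m := by
      rw [Finset.card_filter_add_card_filter_not]
      simp
    have hsplit' : ((Finset.univ.filter fun i : Fin m => c i = c' i).card : ℝ)
        + ((Finset.univ.filter fun i : Fin m => c i ≠ c' i).card : ℝ) = m := by
      exact_mod_cast hsplit
    have hk2 : (0:ℝ) < (k:ℝ)^2 := by positivity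
    nlinarith [hd, hsplit']
  -- double counting
  have hswap : ∑ p ∈ T.offDiag, (Finset.univ.filter fun i : Fin m => p.1 i = p.2 i).card
      = ∑ i : Fin m, (T.offDiag.filter fun p => p.1 i = p.2 i).card := by
    simp_rw [Finset.card_filter]
    rw [Finset.sum_comm]
  have key2 : ∀ i ∈ B, 2 ≤ (T.offDiag.filter fun p => p.1 i = p.2 i).card := by
    intro i hi
    rw [hB, Finset.mem_filter] at hi
    obtain ⟨-, c, hc, c', hc', hne, heq⟩ := hi
    have hsub : ({(c,c'), (c',c)} : Finset ((Fin m → A) × (Fin m → A)))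
        ⊆ T.offDiag.filter fun p => p.1 i = p.2 i := by
      intro p hp
      simp only [Finset.mem_insert, Finset.mem_singleton] at hp
      rcases hp with rfl | rfl
      · exact Finset.mem_filter.mpr ⟨Finset.mem_offDiag.mpr ⟨hc, hc', hne⟩, heq⟩
      · exact Finset.mem_filter.mpr ⟨Finset.mem_offDiag.mpr ⟨hc', hc, hne.symm⟩, heq.symm⟩
    have hcard : ({(c,c'), (c',c)} : Finset ((Fin m → A) × (Fin m → A))).card = 2 := by
      rw [Finset.card_insert_of_notMem (by
        simp only [Finset.mem_singleton, Prod.mk.injEq]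
        exact fun ⟨h, _⟩ => hne h), Finset.card_singleton]
    calc 2 = ({(c,c'), (c',c)} : Finset ((Fin m → A) × (Fin m → A))).card := hcard.symm
      _ ≤ _ := Finset.card_le_card hsub
  -- 2 |B| ≤ S
  have h2B : 2 * B.card ≤ ∑ p ∈ T.offDiag,
      (Finset.univ.filter fun i : Fin m => p.1 i = p.2 i).card := by
    rw [hswap]
    calc 2 * B.card = ∑ _i ∈ B, 2 := by rw [Finset.sum_const, smul_eq_mul, mul_comm]
      _ ≤ ∑ i ∈ B, (T.offDiag.filter fun p => p.1 i = p.2 i).card :=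
          Finset.sum_le_sum key2
      _ ≤ ∑ i : Fin m, (T.offDiag.filter fun p => p.1 i = p.2 i).card :=
          Finset.sum_le_sum_of_subset (Finset.filter_subset _ _)
  -- S ≤ (k²-k) · (2/k²) m
  have hS : ((∑ p ∈ T.offDiag,
      (Finset.univ.filter fun i : Fin m => p.1 i = p.2 i).card : ℕ) : ℝ)
      ≤ ((k:ℝ)^2 - k) * (2/(k:ℝ)^2 * m) := by
    push_cast
    calc (∑ p ∈ T.offDiag,
        ((Finset.univ.filter fun i : Fin m => p.1 i = p.2 i).card : ℝ))
        ≤ ∑ _p ∈ T.offDiag, (2/(k:ℝ)^2 * m) := Finset.sum_le_sum key1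
      _ = (T.offDiag.card : ℝ) * (2/(k:ℝ)^2 * m) := by
          rw [Finset.sum_const, nsmul_eq_mul]
      _ = ((k:ℝ)^2 - k) * (2/(k:ℝ)^2 * m) := by
          rw [Finset.offDiag_card, hTk]
          have : k ≤ k * k := Nat.le_mul_of_pos_left k (by omega)
          push_cast [Nat.cast_sub this]
          ring_nf
  have hBm : B.card < m := by
    have h2B' : (2 * B.card : ℝ) ≤ ((k:ℝ)^2 - k) * (2/(k:ℝ)^2 * m) := by
      calc (2 * B.card : ℝ) ≤ _ := by exact_mod_cast h2B
        _ ≤ _ := hS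
    have hm' : (0:ℝ) < m := by exact_mod_cast hm
    have hk2 : (0:ℝ) < (k:ℝ)^2 := by positivity
    have hfin : ((k:ℝ)^2 - k) * (2/(k:ℝ)^2 * m) < 2 * m := by
      rw [div_mul_eq_mul_div, mul_div_assoc', div_lt_iff₀ hk2]
      nlinarith
    have hlt : (2 * B.card : ℝ) < 2 * m := lt_of_le_of_lt h2B' hfin
    by_contra h
    push_neg at h
    have hh : (m:ℝ) ≤ (B.card:ℝ) := by exact_mod_cast h
    linarith
  obtain ⟨i, hi⟩ : ∃ i : Fin m, i ∉ B := by
    by_contra h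
    push_neg at h
    have : B = Finset.univ := Finset.eq_univ_iff_forall.mpr h
    rw [this, Finset.card_univ, Fintype.card_fin] at hBm
    exact lt_irrefl _ hBm
  refine ⟨i, fun c hc c' hc' heq => ?_⟩
  by_contra hne
  exact hi (Finset.mem_filter.mpr ⟨Finset.mem_univ _, c, hc, c', hc', hne, heq⟩)
end

section
/- Assume a set T of k codewords from a code of length m (with relative minimum distance δ ≥ 1 − 2/k²) is such that at every coordinate some two codewords of T agree. Then the sum of the C(k,2) pairwise Hamming distances between codewords of T is at most C(k,2)·m − m, and hence by averaging some pair of codewords has Hamming distance at most m·(1 − 1/C(k,2)) < m·(1 − 2/k²), a contradiction. -/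
/-!
Count the pairs `(c, c')` of distinct codewords of `T` that differ at a coordinate `i`: at most
`k(k-1) - 2` of them, since the agreeing pair at `i` contributes both `(c, c')` and `(c', c)`.
Summing over the `m` coordinates bounds the sum of all pairwise distances by `m (k(k-1) - 2)`,
so the average over the `k(k-1)` ordered pairs is at most `m (1 - 1/C(k,2))`, which is below the
minimum distance `m (1 - 2/k²)`.
-/

open Finset

namespace Finset

theorem cast_card_offDiag {α : Type*} [DecidableEq α] (s : Finset α) :
    (#s.offDiag : ℝ) = 2 * (#s).choose 2 := by
  rw [offDiag_card, Nat.cast_sub (Nat.le_mul_self _), Nat.cast_choose_two]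
  push_cast; ring

variable {ι A : Type*} [Fintype ι] [DecidableEq A] (T : Finset (ι → A))

theorem sum_product_self_hammingDist :
    ∑ c ∈ T, ∑ c' ∈ T, hammingDist c c' = ∑ p ∈ T.offDiag, hammingDist p.1 p.2 := by
  rw [← sum_product', ← diag_union_offDiag, sum_union (disjoint_diag_offDiag T),
    sum_eq_zero fun p hp => by rw [(mem_diag.1 hp).2, hammingDist_self], zero_add]

theorem sum_offDiag_hammingDist :
    ∑ p ∈ T.offDiag, hammingDist p.1 p.2 = ∑ i, #{p ∈ T.offDiag | p.1 i ≠ p.2 i} := by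
  simp only [hammingDist, card_filter]
  exact sum_comm

theorem card_filter_offDiag_ne_add_two_le {i : ι}
    (hi : ∃ c ∈ T, ∃ c' ∈ T, c ≠ c' ∧ c i = c' i) :
    #{p ∈ T.offDiag | p.1 i ≠ p.2 i} + 2 ≤ #T.offDiag := by
  obtain ⟨c, hc, c', hc', hne, heq⟩ := hi
  have hagreeing : {(c, c'), (c', c)} ⊆ {p ∈ T.offDiag | ¬p.1 i ≠ p.2 i} := by
    simp [insert_subset_iff, hc, hc', hne, hne.symm, heq]
  have htwo : #({(c, c'), (c', c)} : Finset _) = 2 := card_pair (by simp [hne])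
  calc #{p ∈ T.offDiag | p.1 i ≠ p.2 i} + 2
      ≤ #{p ∈ T.offDiag | p.1 i ≠ p.2 i} + #{p ∈ T.offDiag | ¬p.1 i ≠ p.2 i} := by
        grw [← htwo, card_le_card hagreeing]
    _ = #T.offDiag := card_filter_add_card_filter_not _

theorem sum_offDiag_hammingDist_add_le
    (hagree : ∀ i, ∃ c ∈ T, ∃ c' ∈ T, c ≠ c' ∧ c i = c' i) :
    ∑ p ∈ T.offDiag, hammingDist p.1 p.2 + 2 * Fintype.card ι
      ≤ Fintype.card ι * #T.offDiag := by
  calc ∑ p ∈ T.offDiag, hammingDist p.1 p.2 + 2 * Fintype.card ι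
      = ∑ i, (#{p ∈ T.offDiag | p.1 i ≠ p.2 i} + 2) := by
        rw [sum_offDiag_hammingDist, sum_add_distrib, sum_const, card_univ, smul_eq_mul, mul_comm]
    _ ≤ ∑ _i : ι, #T.offDiag := sum_le_sum fun i _ => card_filter_offDiag_ne_add_two_le T (hagree i)
    _ = Fintype.card ι * #T.offDiag := by rw [sum_const, card_univ, smul_eq_mul]

theorem sum_offDiag_hammingDist_le
    (hagree : ∀ i, ∃ c ∈ T, ∃ c' ∈ T, c ≠ c' ∧ c i = c' i) :
    ∑ p ∈ T.offDiag, (hammingDist p.1 p.2 : ℝ)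
      ≤ 2 * ((#T).choose 2 * Fintype.card ι - Fintype.card ι) := by
  have h := sum_offDiag_hammingDist_add_le T hagree
  rify [cast_card_offDiag] at h
  linarith

theorem sum_sum_hammingDist_le
    (hagree : ∀ i, ∃ c ∈ T, ∃ c' ∈ T, c ≠ c' ∧ c i = c' i) :
    ∑ c ∈ T, ∑ c' ∈ T, (hammingDist c c' : ℝ)
      ≤ 2 * ((#T).choose 2 * Fintype.card ι - Fintype.card ι) := by
  calc ∑ c ∈ T, ∑ c' ∈ T, (hammingDist c c' : ℝ)
      = ∑ p ∈ T.offDiag, (hammingDist p.1 p.2 : ℝ) := mod_cast sum_product_self_hammingDist T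
    _ ≤ _ := sum_offDiag_hammingDist_le T hagree

theorem exists_hammingDist_le (hT : 2 ≤ #T)
    (hagree : ∀ i, ∃ c ∈ T, ∃ c' ∈ T, c ≠ c' ∧ c i = c' i) :
    ∃ c ∈ T, ∃ c' ∈ T, c ≠ c' ∧
      (hammingDist c c' : ℝ) ≤ Fintype.card ι * (1 - 1 / ((#T).choose 2 : ℝ)) := by
  have hchoose : ((#T).choose 2 : ℝ) ≠ 0 := by exact_mod_cast (Nat.choose_pos hT).ne'
  have hne : T.offDiag.Nonempty := by
    obtain ⟨c, hc, c', hc', hne⟩ := one_lt_card.1 hT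
    exact ⟨(c, c'), mem_offDiag.2 ⟨hc, hc', hne⟩⟩
  have hsum : ∑ p ∈ T.offDiag, (hammingDist p.1 p.2 : ℝ)
      ≤ ∑ _p ∈ T.offDiag, Fintype.card ι * (1 - 1 / ((#T).choose 2 : ℝ)) := by
    rw [sum_const, nsmul_eq_mul, cast_card_offDiag]
    convert sum_offDiag_hammingDist_le T hagree using 1
    field_simp
  obtain ⟨p, hp, hle⟩ := exists_le_of_sum_le hne hsum
  obtain ⟨hp1, hp2, hp12⟩ := mem_offDiag.1 hp
  exact ⟨p.1, hp1, p.2, hp2, hp12, hle⟩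

end Finset

theorem two_div_sq_lt_one_div_choose_two {k : ℕ} (hk : 2 ≤ k) :
    2 / (k : ℝ) ^ 2 < 1 / (k.choose 2 : ℝ) := by
  have hk' : (2 : ℝ) ≤ k := by exact_mod_cast hk
  rw [Nat.cast_choose_two, div_lt_div_iff₀ (by positivity) (by nlinarith)]
  nlinarith

theorem code_agreement_contradiction_general {A : Type*} [DecidableEq A]
    (m k : ℕ) (hm : 1 ≤ m) (hk : 2 ≤ k)
    (T : Finset (Fin m → A)) (hT : T.card = k)
    (hdist : ∀ c ∈ T, ∀ c' ∈ T, c ≠ c' →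
      (1 - 2 / (k : ℝ) ^ 2) * m ≤ ((Finset.univ.filter fun i : Fin m => c i ≠ c' i).card : ℝ))
    (hagree : ∀ i : Fin m, ∃ c ∈ T, ∃ c' ∈ T, c ≠ c' ∧ c i = c' i) :
    (∑ c ∈ T, ∑ c' ∈ T, ((Finset.univ.filter fun i : Fin m => c i ≠ c' i).card : ℝ)
        ≤ 2 * ((k.choose 2 : ℝ) * m - m)) ∧
    (∃ c ∈ T, ∃ c' ∈ T, c ≠ c' ∧
      ((Finset.univ.filter fun i : Fin m => c i ≠ c' i).card : ℝ)
        ≤ m * (1 - 1 / (k.choose 2 : ℝ))) ∧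
    (m : ℝ) * (1 - 1 / (k.choose 2 : ℝ)) < (m : ℝ) * (1 - 2 / (k : ℝ) ^ 2) ∧
    False := by
  have hsum := T.sum_sum_hammingDist_le hagree
  obtain ⟨c, hc, c', hc', hne, hclose⟩ := T.exists_hammingDist_le (hT ▸ hk) hagree
  simp only [Fintype.card_fin, hT] at hsum hclose
  have hgap : (m : ℝ) * (1 - 1 / (k.choose 2 : ℝ)) < m * (1 - 2 / (k : ℝ) ^ 2) := by
    have hm' : (0 : ℝ) < m := by exact_mod_cast hm
    exact mul_lt_mul_of_pos_left (by linarith [two_div_sq_lt_one_div_choose_two hk]) hm'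
  have hfar := hdist c hc c' hc' hne
  refine ⟨hsum, ⟨c, hc, c', hc', hne, hclose⟩, hgap, ?_⟩
  change _ ≤ (hammingDist c c' : ℝ) at hfar
  linarith

/-- If a set `T` of `k` codewords of a code with relative minimum distance
`1 - 2/k²` is such that at every coordinate some two distinct codewords of `T` agree,
then the sum of pairwise Hamming distances is at most `C(k,2)·m - m`, some pair of
distinct codewords is at distance at most `m·(1 - 1/C(k,2)) < m·(1 - 2/k²)`, and this
contradicts the minimum distance assumption. -/
theorem code_agreement_contradiction {A : Type*} [Fintype A] [DecidableEq A]
    (m k : ℕ) (hm : 1 ≤ m) (hk : 2 ≤ k)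
    (T : Finset (Fin m → A)) (hT : T.card = k)
    (hdist : ∀ c ∈ T, ∀ c' ∈ T, c ≠ c' →
      (1 - 2 / (k : ℝ) ^ 2) * m ≤ ((Finset.univ.filter fun i : Fin m => c i ≠ c' i).card : ℝ))
    (hagree : ∀ i : Fin m, ∃ c ∈ T, ∃ c' ∈ T, c ≠ c' ∧ c i = c' i) :
    (∑ c ∈ T, ∑ c' ∈ T, ((Finset.univ.filter fun i : Fin m => c i ≠ c' i).card : ℝ)
        ≤ 2 * ((k.choose 2 : ℝ) * m - m)) ∧
    (∃ c ∈ T, ∃ c' ∈ T, c ≠ c' ∧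
      ((Finset.univ.filter fun i : Fin m => c i ≠ c' i).card : ℝ)
        ≤ m * (1 - 1 / (k.choose 2 : ℝ))) ∧
    (m : ℝ) * (1 - 1 / (k.choose 2 : ℝ)) < (m : ℝ) * (1 - 2 / (k : ℝ) ^ 2) ∧
    False :=
  code_agreement_contradiction_general m k hm hk T hT hdist hagree
end

section
/- Let A be an (n,k,k²)-splitter (injective sense), B a (k²,k,r)-splitter (even-splitting sense) with r = log k dividing k, and C an (k², k/r, ck/r)-splitter (injective sense). For a ∈ A, b ∈ B, and a tuple (h_1,…,h_r) ∈ C^r, define f : [n] → [ck] by f(x) = (ck/r)·(b(a(x)) − 1) + h_{b(a(x))}(a(x)). Then the family H of all such f is an (n,k,ck)-splitter in the injective sense: for every S ⊆ [n] with |S| = k, some f ∈ H is injective on S. -/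
/-- Composing an `(n,k,k²)`-splitter `A` (injective sense), a
`(k²,k,r)`-splitter `B` (even-splitting sense, `r = ⌈log₂ k⌉` dividing `k`), and a
`(k², k/r, ck/r)`-splitter `C` (injective sense) via
`f(x) = (ck/r)·b(a(x)) + h_{b(a(x))}(a(x))` yields an `(n,k,ck)`-splitter in the
injective sense: every `k`-subset `S` of `[n]` has such a composed `f` injective on it. -/
theorem splitter_composition (n k c r : ℕ) (hk : 1 ≤ k) (hc : 1 ≤ c) (hr : 1 ≤ r)
    (hrlog : r = Nat.clog 2 k) (hrk : r ∣ k)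
    (A : Finset (Fin n → Fin (k ^ 2)))
    (B : Finset (Fin (k ^ 2) → Fin r))
    (C : Finset (Fin (k ^ 2) → Fin (c * k / r)))
    (hA : ∀ S : Finset (Fin n), S.card = k → ∃ a ∈ A, Set.InjOn a ↑S)
    (hB : ∀ S : Finset (Fin (k ^ 2)), S.card = k → ∃ b ∈ B, ∀ j : Fin r,
      k / r ≤ (S.filter fun x => b x = j).card ∧
        (S.filter fun x => b x = j).card ≤ (k + r - 1) / r)
    (hC : ∀ S : Finset (Fin (k ^ 2)), S.card = k / r → ∃ h ∈ C, Set.InjOn h ↑S) :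
    ∀ S : Finset (Fin n), S.card = k →
      ∃ a ∈ A, ∃ b ∈ B, ∃ h : Fin r → Fin (k ^ 2) → Fin (c * k / r),
        (∀ j, h j ∈ C) ∧
        (∀ x : Fin n, (c * k / r) * (b (a x) : ℕ) + (h (b (a x)) (a x) : ℕ) < c * k) ∧
        Set.InjOn
          (fun x : Fin n => (c * k / r) * (b (a x) : ℕ) + (h (b (a x)) (a x) : ℕ)) ↑S := by
  intro S hS
  obtain ⟨a, haA, ha⟩ := hA S hS
  have hcard : (S.image a).card = k := by
    rw [Finset.card_image_of_injOn ha, hS]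
  obtain ⟨b, hbB, hb⟩ := hB (S.image a) hcard
  -- since r ∣ k, ⌈k/r⌉ = k/r
  have hceil : (k + r - 1) / r = k / r := by
    obtain ⟨m, rfl⟩ := hrk
    have h1 : r * m + r - 1 = r * m + (r - 1) := by omega
    rw [h1, Nat.mul_add_div (by omega), Nat.div_eq_of_lt (by omega),
      Nat.mul_div_cancel_left _ (by omega : 0 < r), add_zero]
  have hTcard : ∀ j : Fin r, ((S.image a).filter fun x => b x = j).card = k / r := by
    intro j
    have := hb j
    omega
  choose h hhC hhinj using fun j => hC _ (hTcard j)
  have hrck : r ∣ c * k := hrk.mul_left c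
  have hm : 0 < c * k / r :=
    Nat.div_pos (le_trans (Nat.le_of_dvd (by omega) hrk) (Nat.le_mul_of_pos_left k hc)) (by omega)
  have hmr : (c * k / r) * r = c * k := Nat.div_mul_cancel hrck
  refine ⟨a, haA, b, hbB, h, hhC, ?_, ?_⟩
  · intro x
    have h1 : (b (a x) : ℕ) < r := (b (a x)).isLt
    have h2 : (h (b (a x)) (a x) : ℕ) < c * k / r := (h (b (a x)) (a x)).isLt
    calc (c * k / r) * (b (a x) : ℕ) + (h (b (a x)) (a x) : ℕ)
        < (c * k / r) * (b (a x) : ℕ) + (c * k / r) := by omega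
      _ = (c * k / r) * ((b (a x) : ℕ) + 1) := by ring
      _ ≤ (c * k / r) * r := Nat.mul_le_mul_left _ (by omega)
      _ = c * k := hmr
  · intro x hx y hy hxy
    simp only at hxy
    have e1 : ∀ z : Fin n,
        ((c * k / r) * (b (a z) : ℕ) + (h (b (a z)) (a z) : ℕ)) / (c * k / r)
          = (b (a z) : ℕ) := by
      intro z
      rw [Nat.mul_add_div hm, Nat.div_eq_of_lt (h (b (a z)) (a z)).isLt, add_zero]
    have hbeq : b (a x) = b (a y) := by
      have := e1 x
      rw [hxy, e1 y] at this
      exact Fin.ext this.symm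
    set j := b (a x) with hj
    have hheq : (h j (a x) : ℕ) = (h j (a y) : ℕ) := by
      rw [← hbeq] at hxy
      omega
    have hmemx : a x ∈ (S.image a).filter fun z => b z = j :=
      Finset.mem_filter.mpr ⟨Finset.mem_image_of_mem a hx, rfl⟩
    have hmemy : a y ∈ (S.image a).filter fun z => b z = j :=
      Finset.mem_filter.mpr ⟨Finset.mem_image_of_mem a hy, hbeq.symm⟩
    have haeq : a x = a y := hhinj j hmemx hmemy (Fin.ext hheq)
    exact ha hx hy haeq
end

section
/- Let B(X_1, …, X_m) be the subset graph of the vertex sets X_i = V(T_i) of the subtrees T_1, …, T_m obtained from partitioning the edge set of a tree T into m edge-disjoint subtrees. Then B is a tree with m set nodes and at most m − 1 connector nodes. -/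
/-!
Each block `E i` spans a subtree of `T`, so `|X i| = |E i| + 1`, and summing over the partition of
the `|V| - 1` edges of `T` gives `∑ᵢ |X i| = |V| + m - 1`. Let `d v` be the number of sets `X i`
containing `v`; then `∑ᵥ d v = ∑ᵢ |X i|`, `d = 1` off `C` and `d ≥ 2` on `C`. The edges of `B` are
the incidences at connector nodes, so there are `∑_{c ∈ C} d c = ∑ᵥ d v - (|V| - |C|) = m - 1 + |C|`
of them: one fewer than the nodes of `B`. Since consecutive vertices of a path in `T` lie in a
common block, `B` is connected, hence a tree; and `2 |C| ≤ ∑_{c ∈ C} d c = m - 1 + |C|`.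
-/

open Finset Function

namespace SimpleGraph

variable {ι V : Type*}

lemma IsAcyclic.ncard_edgeSet_add_one_of_connected_induce [Finite V] {G : SimpleGraph V}
    (hG : G.IsAcyclic) {s : Set V} (hs : G.support ⊆ s) (hconn : (G.induce s).Connected) :
    G.edgeSet.ncard + 1 = s.ncard := by
  have := Fintype.ofFinite V
  classical
  have hcard := (isTree_iff_connected_and_card.1 ⟨hconn, hG.induce s⟩).2
  rw [← Nat.card_coe_set_eq, ← Nat.card_coe_set_eq, ← hcard, Nat.card_eq_fintype_card,
    Nat.card_eq_fintype_card, ← edgeFinset_card, ← edgeFinset_card,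
    card_edgeFinset_induce_of_support_subset hs]

lemma IsAcyclic.ncard_verts_eq_ncard_add_one [Finite V] {G : SimpleGraph V} (hG : G.IsAcyclic)
    {F : Set (Sym2 V)} (hF : F ⊆ G.edgeSet)
    (hconn : ((fromEdgeSet F).induce {v | ∃ e ∈ F, v ∈ e}).Connected) :
    {v | ∃ e ∈ F, v ∈ e}.ncard = F.ncard + 1 := by
  have hdiag : F \ Sym2.diagSet = F := sdiff_eq_left.2 <|
    Set.subset_compl_iff_disjoint_right.1 (hF.trans G.edgeSet_subset_compl_diagSet)
  have hle : fromEdgeSet F ≤ G := (fromEdgeSet_le G).2 (by rwa [hdiag])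
  have hsupp : (fromEdgeSet F).support ⊆ {v | ∃ e ∈ F, v ∈ e} :=
    fun v ⟨w, hvw⟩ => ⟨s(v, w), ((fromEdgeSet_adj _).1 hvw).1, Sym2.mem_mk_left v w⟩
  rw [← (hG.anti hle).ncard_edgeSet_add_one_of_connected_induce hsupp hconn,
    edgeSet_fromEdgeSet, hdiag]

lemma IsTree.sum_ncard_verts_add_one [Fintype ι] [Fintype V] {T : SimpleGraph V}
    (hT : T.IsTree) {E : ι → Set (Sym2 V)} (hdisj : Pairwise (Disjoint on E))
    (hcover : ⋃ i, E i = T.edgeSet)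
    (hconn : ∀ i, ((fromEdgeSet (E i)).induce {v | ∃ e ∈ E i, v ∈ e}).Connected) :
    ∑ i, {v | ∃ e ∈ E i, v ∈ e}.ncard + 1 = Fintype.card V + Fintype.card ι := by
  have hE : ∑ i, (E i).ncard = T.edgeSet.ncard := by
    rw [← hcover, Set.ncard_iUnion_of_finite (fun i => Set.toFinite _) hdisj,
      finsum_eq_sum_of_fintype]
  have hV : T.edgeSet.ncard + 1 = Fintype.card V := by
    rw [← Nat.card_eq_fintype_card, ← (isTree_iff_connected_and_card.1 hT).2, Nat.card_coe_set_eq]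
  have hsub : ∀ i, E i ⊆ T.edgeSet := fun i => hcover ▸ Set.subset_iUnion E i
  simp_rw [hT.isAcyclic.ncard_verts_eq_ncard_add_one (hsub _) (hconn _), sum_add_distrib, hE,
    sum_const, card_univ, smul_eq_mul, mul_one]
  omega

end SimpleGraph

open SimpleGraph

section SubsetGraph

variable {ι V : Type*}

def subsetGraph (X : ι → Set V) (C : Set V) : SimpleGraph (ι ⊕ C) :=
  fromRel fun a b => ∃ (i : ι) (c : C), a = Sum.inl i ∧ b = Sum.inr c ∧ (c : V) ∈ X i

def connectors (X : ι → Set V) : Set V :=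
  {v | ∃ i j, i ≠ j ∧ v ∈ X i ∧ v ∈ X j}

variable {X : ι → Set V} {C : Set V}

lemma subsetGraph_adj_inl_inr {i : ι} {c : C} :
    (subsetGraph X C).Adj (.inl i) (.inr c) ↔ (c : V) ∈ X i := by
  simp [subsetGraph]

lemma edgeSet_subsetGraph :
    (subsetGraph X C).edgeSet =
      Set.range fun p : {p : ι × C // (p.2 : V) ∈ X p.1} => s(.inl p.1.1, .inr p.1.2) := by
  ext e
  induction e using Sym2.ind with
  | _ a b =>
    simp only [mem_edgeSet, subsetGraph, fromRel_adj, Set.mem_range]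
    constructor
    · rintro ⟨-, ⟨i, c, rfl, rfl, hc⟩ | ⟨i, c, rfl, rfl, hc⟩⟩
      · exact ⟨⟨(i, c), hc⟩, rfl⟩
      · exact ⟨⟨(i, c), hc⟩, Sym2.eq_swap⟩
    · rintro ⟨⟨⟨i, c⟩, hc⟩, he⟩
      rcases Sym2.eq_iff.1 he with ⟨rfl, rfl⟩ | ⟨rfl, rfl⟩
      · exact ⟨Sum.inl_ne_inr, .inl ⟨i, c, rfl, rfl, hc⟩⟩
      · exact ⟨Sum.inr_ne_inl, .inr ⟨i, c, rfl, rfl, hc⟩⟩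

lemma reachable_subsetGraph_connectors_of_mem {i j : ι} {v : V} (hi : v ∈ X i) (hj : v ∈ X j) :
    (subsetGraph X (connectors X)).Reachable (.inl i) (.inl j) := by
  obtain rfl | hij := eq_or_ne i j
  · rfl
  · let c : connectors X := ⟨v, i, j, hij, hi, hj⟩
    exact (subsetGraph_adj_inl_inr (c := c) |>.2 hi).reachable.trans
      (subsetGraph_adj_inl_inr (c := c) |>.2 hj).reachable.symm

lemma connected_subsetGraph_connectors [Nonempty ι] {G : SimpleGraph V} (hG : G.Connected)
    (hne : ∀ i, (X i).Nonempty) (hadj : ∀ u v, G.Adj u v → ∃ i, u ∈ X i ∧ v ∈ X i) :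
    (subsetGraph X (connectors X)).Connected := by
  have hwalk : ∀ {u w : V}, G.Walk u w → ∀ {i j : ι}, u ∈ X i → w ∈ X j →
      (subsetGraph X (connectors X)).Reachable (.inl i) (.inl j) := by
    intro u w p
    induction p with
    | nil => exact reachable_subsetGraph_connectors_of_mem
    | cons h _ ih =>
      intro i j hi hj
      obtain ⟨k, hu, hv⟩ := hadj _ _ h
      exact (reachable_subsetGraph_connectors_of_mem hi hu).trans (ih hv hj)
  have hinl : ∀ a, ∃ i, (subsetGraph X (connectors X)).Reachable a (.inl i)
    | .inl i => ⟨i, .rfl⟩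
    | .inr c =>
      have ⟨i, _, _, hi, _⟩ := c.2
      ⟨i, (subsetGraph_adj_inl_inr.2 hi).symm.reachable⟩
  refine (connected_iff _).2 ⟨fun a b => ?_, ⟨.inl (Classical.arbitrary ι)⟩⟩
  obtain ⟨i, hi⟩ := hinl a
  obtain ⟨j, hj⟩ := hinl b
  obtain ⟨u, hu⟩ := hne i
  obtain ⟨w, hw⟩ := hne j
  exact hi.trans ((hwalk (hG.preconnected u w).some hu hw).trans hj.symm)

open scoped Classical

lemma ncard_edgeSet_subsetGraph [Fintype ι] [Fintype V] :
    (subsetGraph X C).edgeSet.ncard = ∑ c : C, #{i | (c : V) ∈ X i} := by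
  have hinj : Injective
      fun p : {p : ι × C // (p.2 : V) ∈ X p.1} => (s(.inl p.1.1, .inr p.1.2) : Sym2 (ι ⊕ C)) := by
    intro p q h
    rcases Sym2.eq_iff.1 h with ⟨h₁, h₂⟩ | ⟨h₁, -⟩
    · exact Subtype.ext (Prod.ext (Sum.inl.inj h₁) (Sum.inr.inj h₂))
    · exact absurd h₁ Sum.inl_ne_inr
  rw [edgeSet_subsetGraph, Set.ncard_range_of_injective hinj, Nat.card_eq_fintype_card,
    Fintype.card_subtype, card_filter, Fintype.sum_prod_type_right]
  simp_rw [card_filter]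

lemma sum_ncard_eq_sum_card_filter_mem [Fintype ι] [Fintype V] (X : ι → Set V) :
    ∑ i, (X i).ncard = ∑ v, #{i | v ∈ X i} := by
  convert sum_card_bipartiteAbove_eq_sum_card_bipartiteBelow (fun i v => v ∈ X i) using 2 with i
  · simp [bipartiteAbove, Set.ncard_eq_toFinset_card']
  · rfl

lemma mem_connectors_iff_one_lt_card [Fintype ι] {v : V} :
    v ∈ connectors X ↔ 1 < #{i | v ∈ X i} := by
  simp only [connectors, Finset.one_lt_card, Set.mem_ofPred_eq, mem_filter, mem_univ, true_and]
  grind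

lemma isTree_subsetGraph_connectors_and_ncard_le [Fintype ι] [Fintype V]
    (hcov : ∀ v, ∃ i, v ∈ X i) (hsum : ∑ i, (X i).ncard + 1 = Fintype.card V + Fintype.card ι)
    (hconn : (subsetGraph X (connectors X)).Connected) :
    (subsetGraph X (connectors X)).IsTree ∧ (connectors X).ncard ≤ Fintype.card ι - 1 := by
  set C := connectors X
  set d : V → ℕ := fun v => #{i | v ∈ X i}
  have hd₁ : ∀ v ∉ C, d v = 1 := fun v hv =>
    have ⟨i, hi⟩ := hcov v
    le_antisymm (not_lt.1 (mt mem_connectors_iff_one_lt_card.2 hv))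
      (card_pos.2 ⟨i, mem_filter.2 ⟨mem_univ i, hi⟩⟩)
  have hd₂ : ∀ c : C, 2 ≤ d c := fun c => mem_connectors_iff_one_lt_card.1 c.2
  have hsplit : ∑ v, d v = ∑ c : C, d c + Cᶜ.ncard := by
    rw [← Fintype.sum_subtype_add_sum_subtype (· ∈ C) d,
      Fintype.sum_congr (fun v : {v // v ∉ C} => d v) (fun _ => 1) fun v => hd₁ v v.2,
      sum_const, card_univ, smul_eq_mul, mul_one, ← Nat.card_eq_fintype_card]
    rfl
  have hV : C.ncard + Cᶜ.ncard = Fintype.card V := by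
    rw [Set.ncard_add_ncard_compl, Nat.card_eq_fintype_card]
  have hC : 2 * C.ncard ≤ ∑ c : C, d c :=
    calc 2 * C.ncard = ∑ _c : C, 2 := by
          rw [sum_const, card_univ, ← Nat.card_eq_fintype_card, Nat.card_coe_set_eq, smul_eq_mul,
            mul_comm]
      _ ≤ ∑ c : C, d c := sum_le_sum fun c _ => hd₂ c
  have hE : (subsetGraph X C).edgeSet.ncard = ∑ c : C, d c := ncard_edgeSet_subsetGraph
  have hd : ∑ v, d v + 1 = Fintype.card V + Fintype.card ι := by
    rw [← sum_ncard_eq_sum_card_filter_mem, hsum]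
  refine ⟨isTree_iff_connected_and_card.2 ⟨hconn, ?_⟩, by omega⟩
  simp only [Nat.card_sum, Nat.card_coe_set_eq, Nat.card_eq_fintype_card (α := ι)]
  omega

end SubsetGraph

theorem subset_graph_of_tree_partition_general {V : Type*} [Fintype V]
    (T : SimpleGraph V) (hT : T.IsTree)
    (m : ℕ) (hm : 1 ≤ m) (E : Fin m → Set (Sym2 V))
    (hdisj : ∀ i j, i ≠ j → Disjoint (E i) (E j))
    (hcover : (⋃ i, E i) = T.edgeSet)
    (hconn : ∀ i, ((SimpleGraph.fromEdgeSet (E i)).induce {v | ∃ e ∈ E i, v ∈ e}).Connected)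
    (X : Fin m → Set V) (hX : ∀ i, X i = {v | ∃ e ∈ E i, v ∈ e})
    (C : Set V) (hC : C = {v | ∃ i j, i ≠ j ∧ v ∈ X i ∧ v ∈ X j}) :
    (SimpleGraph.fromRel (fun a b : Fin m ⊕ ↥C =>
        ∃ (i : Fin m) (c : ↥C), a = Sum.inl i ∧ b = Sum.inr c ∧ (c : V) ∈ X i)).IsTree ∧
    C.ncard ≤ m - 1 := by
  subst hC
  have : Nonempty (Fin m) := ⟨⟨0, hm⟩⟩
  have hadj : ∀ u v, T.Adj u v → ∃ i, u ∈ X i ∧ v ∈ X i := fun u v huv => by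
    obtain ⟨i, hi⟩ := Set.mem_iUnion.1 (hcover ▸ huv : s(u, v) ∈ ⋃ i, E i)
    simp only [hX]
    exact ⟨i, ⟨_, hi, Sym2.mem_mk_left u v⟩, ⟨_, hi, Sym2.mem_mk_right u v⟩⟩
  have hne : ∀ i, (X i).Nonempty := fun i => hX i ▸ Set.nonempty_coe_sort.1 (hconn i).nonempty
  have hcov : ∀ v, ∃ i, v ∈ X i := by
    obtain ⟨u, e, he, hue⟩ := hX ⟨0, hm⟩ ▸ hne ⟨0, hm⟩
    have : Nontrivial V := nontrivial_of_ne _ _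
      (T.edge_other_ne (hcover ▸ Set.mem_iUnion_of_mem _ he) hue).symm
    intro v
    obtain ⟨w, hvw⟩ := hT.connected.preconnected.exists_adj_of_nontrivial v
    exact (hadj v w hvw).imp fun _ => And.left
  have hsum : ∑ i, (X i).ncard + 1 = Fintype.card V + Fintype.card (Fin m) := by
    simpa only [hX] using hT.sum_ncard_verts_add_one (fun i j => hdisj i j) hcover hconn
  have key := isTree_subsetGraph_connectors_and_ncard_le hcov hsum
    (connected_subsetGraph_connectors hT.connected hne hadj)
  rwa [Fintype.card_fin] at key

/-- If the edge set of a tree `T` is partitioned into `m` blocks, each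
inducing a connected subtree with vertex set `X i`, then the subset graph
`B(X₁, …, X_m)` (set nodes `Fin m`, connector nodes `C = ⋃_{i≠j} Xᵢ ∩ Xⱼ`, edges
between `sᵢ` and the connector nodes of `Xᵢ`) is a tree with `m` set nodes and at most
`m - 1` connector nodes. -/
theorem subset_graph_of_tree_partition {V : Type*} [Fintype V] [DecidableEq V]
    (T : SimpleGraph V) (hT : T.IsTree)
    (m : ℕ) (hm : 1 ≤ m) (E : Fin m → Set (Sym2 V))
    (hsub : ∀ i, E i ⊆ T.edgeSet)
    (hdisj : ∀ i j, i ≠ j → Disjoint (E i) (E j))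
    (hcover : (⋃ i, E i) = T.edgeSet)
    (hconn : ∀ i, ((SimpleGraph.fromEdgeSet (E i)).induce {v | ∃ e ∈ E i, v ∈ e}).Connected)
    (X : Fin m → Set V) (hX : ∀ i, X i = {v | ∃ e ∈ E i, v ∈ e})
    (C : Set V) (hC : C = {v | ∃ i j, i ≠ j ∧ v ∈ X i ∧ v ∈ X j}) :
    (SimpleGraph.fromRel (fun a b : Fin m ⊕ ↥C =>
        ∃ (i : Fin m) (c : ↥C), a = Sum.inl i ∧ b = Sum.inr c ∧ (c : V) ∈ X i)).IsTree ∧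
    C.ncard ≤ m - 1 :=
  subset_graph_of_tree_partition_general T hT m hm E hdisj hcover hconn X hX C hC
end
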